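/- arXiv:1308.5053 — 2 statements merged into one kernel-verified Lean document; each statement's English description precedes it below -/
import Mathlib

section
/- Suppose (π_i)_{i=0}^{Q} are nonnegative reals with ∑_{i=0}^{Q} π_i = 1 and π_i ≤ φ π_{i-1} for all 1 ≤ i ≤ Q, where φ > 0. Suppose (π*_i)_{i=0}^{Q} satisfy: π*_i = π*_0 φ^i for 0 ≤ i ≤ k-1, π*_k = 1 - ∑_{i=0}^{k-1} π*_0 φ^i ≥ 0, π*_i = 0 for i > k, with π*_0 = π_0 and ∑ π*_i = 1. Then ∑_{i=0}^{Q} i·π_i ≥ ∑_{i=0}^{Q} i·π*_i. -/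
/-!
Writing the mean as a sum of tail masses, `∑ i, i * p i = ∑ j, p (j, Q]`, it suffices that
every tail of `πs` is at most the corresponding tail of `π`. Beyond the threshold `k` the tails
of `πs` vanish. Below it, the growth constraint gives `π i ≤ π 0 * φ ^ i = πs i`, so every head
of `π` is at most the head of `πs`, and since both have total mass `1` the tails compare the
other way.
-/

open Finset

lemma sum_range_natCast_mul_eq_sum_sum_Ico (n : ℕ) (f : ℕ → ℝ) :
    ∑ i ∈ range n, (i : ℝ) * f i = ∑ j ∈ range n, ∑ i ∈ Ico (j + 1) n, f i := by
  rw [range_eq_Ico, sum_Ico_Ico_comm' 0 n fun _ i => f i]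
  simp

lemma sum_range_natCast_mul_le_of_sum_Ico_le {n : ℕ} {f g : ℕ → ℝ}
    (htail : ∀ j < n, ∑ i ∈ Ico (j + 1) n, f i ≤ ∑ i ∈ Ico (j + 1) n, g i) :
    ∑ i ∈ range n, (i : ℝ) * f i ≤ ∑ i ∈ range n, (i : ℝ) * g i := by
  rw [sum_range_natCast_mul_eq_sum_sum_Ico, sum_range_natCast_mul_eq_sum_sum_Ico]
  exact sum_le_sum fun j hj => htail j (mem_range.mp hj)

lemma sum_Ico_le_of_sum_range_le_of_sum_range_eq {m n : ℕ} (hmn : m ≤ n) {f g : ℕ → ℝ}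
    (htotal : ∑ i ∈ range n, f i = ∑ i ∈ range n, g i)
    (hhead : ∑ i ∈ range m, g i ≤ ∑ i ∈ range m, f i) :
    ∑ i ∈ Ico m n, f i ≤ ∑ i ∈ Ico m n, g i := by
  rw [← sum_range_add_sum_Ico f hmn, ← sum_range_add_sum_Ico g hmn] at htotal
  linarith

lemma le_mul_pow_of_le_mul_pred {Q : ℕ} {φ : ℝ} (hφ : 0 ≤ φ) {π : ℕ → ℝ}
    (hgrow : ∀ i, 1 ≤ i → i ≤ Q → π i ≤ φ * π (i - 1)) :
    ∀ i ≤ Q, π i ≤ π 0 * φ ^ i := by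
  intro i
  induction i with
  | zero => simp
  | succ n ih =>
    intro hn
    calc π (n + 1) ≤ φ * π n := hgrow (n + 1) n.succ_pos hn
      _ ≤ φ * (π 0 * φ ^ n) := mul_le_mul_of_nonneg_left (ih (by omega)) hφ
      _ = π 0 * φ ^ (n + 1) := by ring

theorem stmt_8_general (Q k : ℕ) (φ : ℝ) (hφ : 0 < φ) (π πs : ℕ → ℝ)
    (hπ : ∀ i, i ≤ Q → 0 ≤ π i)
    (hsum : ∑ i ∈ Finset.range (Q + 1), π i = 1)
    (hgrow : ∀ i, 1 ≤ i → i ≤ Q → π i ≤ φ * π (i - 1))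
    (h0 : πs 0 = π 0)
    (hlow : ∀ i, i ≤ k - 1 → πs i = πs 0 * φ ^ i)
    (habove : ∀ i, k < i → πs i = 0)
    (hsums : ∑ i ∈ Finset.range (Q + 1), πs i = 1) :
    ∑ i ∈ Finset.range (Q + 1), (i : ℝ) * πs i ≤
      ∑ i ∈ Finset.range (Q + 1), (i : ℝ) * π i := by
  have hbound := le_mul_pow_of_le_mul_pred hφ.le hgrow
  refine sum_range_natCast_mul_le_of_sum_Ico_le fun j hj => ?_
  rcases le_or_gt k j with hkj | hjk
  · rw [sum_eq_zero fun i hi => habove i (by grind)]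
    exact sum_nonneg fun i hi => hπ i (by grind)
  · refine sum_Ico_le_of_sum_range_le_of_sum_range_eq hj (hsums.trans hsum.symm) ?_
    refine sum_le_sum fun i hi => ?_
    rw [hlow i (by grind), h0]
    exact hbound i (by grind)

/-- Exchange argument: among distributions on `{0,…,Q}` with fixed mass at 0 and the
growth constraint `π i ≤ φ π (i-1)`, the one saturating the bound up to threshold `k`
and vanishing beyond minimizes the mean. -/
theorem stmt_8 (Q k : ℕ) (hk : k ≤ Q) (φ : ℝ) (hφ : 0 < φ) (π πs : ℕ → ℝ)
    (hπ : ∀ i, i ≤ Q → 0 ≤ π i)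
    (hsum : ∑ i ∈ Finset.range (Q + 1), π i = 1)
    (hgrow : ∀ i, 1 ≤ i → i ≤ Q → π i ≤ φ * π (i - 1))
    (h0 : πs 0 = π 0)
    (hlow : ∀ i, i ≤ k - 1 → πs i = πs 0 * φ ^ i)
    (hkval : πs k = 1 - ∑ i ∈ Finset.range k, πs 0 * φ ^ i)
    (hknn : 0 ≤ πs k)
    (habove : ∀ i, k < i → πs i = 0)
    (hsums : ∑ i ∈ Finset.range (Q + 1), πs i = 1) :
    ∑ i ∈ Finset.range (Q + 1), (i : ℝ) * πs i ≤
      ∑ i ∈ Finset.range (Q + 1), (i : ℝ) * π i :=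
  stmt_8_general Q k φ hφ π πs hπ hsum hgrow h0 hlow habove hsums
end

section
/- Let (π_i)_{i≥0} be nonnegative with π_i = τ ∑_{m=max(0,i-k+1)}^{i-1} π_m for all i > N (some index N), where τ = η₁/(1-η₁) with 0 < η₁ < 1/2 and k ≥ 1. If additionally τ·k < 1, then the sequence (π_i)_{i>N} is summable: ∑_{i>N} π_i ≤ (τk/(1-τk)) ∑_{m=N-k+1}^{N} π_m. -/
/-- Tail summability of the recursion `π i = τ ∑_{m=[i-k+1]^+}^{i-1} π m` when `τ k < 1`. -/
theorem stmt_15 (η₁ : ℝ) (h₁ : 0 < η₁) (h₁' : η₁ < 1 / 2) (k N : ℕ) (hk : 1 ≤ k)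
    (τ : ℝ) (hτ : τ = η₁ / (1 - η₁)) (hτk : τ * k < 1)
    (π : ℕ → ℝ) (hπ : ∀ i, 0 ≤ π i)
    (hrec : ∀ i, N < i → π i = τ * ∑ m ∈ Finset.Ico (i + 1 - k) i, π m) :
    Summable (fun j : ℕ => π (N + 1 + j)) ∧
    (∑' j : ℕ, π (N + 1 + j)) ≤ (τ * k / (1 - τ * k)) * ∑ m ∈ Finset.Icc (N + 1 - k) N, π m := by
  have hη1 : (0:ℝ) < 1 - η₁ := by linarith
  have hτpos : 0 < τ := by rw [hτ]; positivity
  have hτnn : 0 ≤ τ := le_of_lt hτpos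
  have hτkpos : (0:ℝ) < 1 - τ * k := by linarith
  set B : ℝ := ∑ m ∈ Finset.Icc (N + 1 - k) N, π m with hB
  have hBnn : 0 ≤ B := Finset.sum_nonneg fun m _ => hπ m
  set C : ℝ := (τ * k / (1 - τ * k)) * B with hC
  -- key bound on partial sums over Ico (N+1) (N+1+n)
  have key : ∀ n : ℕ, (∑ i ∈ Finset.Ico (N + 1) (N + 1 + n), π i) ≤ C := by
    intro n
    set I : Finset ℕ := Finset.Ico (N + 1) (N + 1 + n) with hI
    set S : ℝ := ∑ i ∈ I, π i with hS
    have hSnn : 0 ≤ S := Finset.sum_nonneg fun m _ => hπ m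
    set T : Finset ℕ := Finset.Ico (N + 1 - k) (N + n) with hT
    -- step 1: rewrite using the recursion
    have h1 : S = τ * ∑ i ∈ I, ∑ m ∈ Finset.Ico (i + 1 - k) i, π m := by
      rw [hS, Finset.mul_sum]
      refine Finset.sum_congr rfl fun i hi => ?_
      exact hrec i (by simp [hI, Finset.mem_Ico] at hi; omega)
    -- step 2: inner window is inside T
    have hsub : ∀ i ∈ I, Finset.Ico (i + 1 - k) i ⊆ T := by
      intro i hi m hm
      simp only [hI, Finset.mem_Ico] at hi
      simp only [Finset.mem_Ico] at hm
      simp only [hT, Finset.mem_Ico]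
      omega
    have h2 : ∑ i ∈ I, ∑ m ∈ Finset.Ico (i + 1 - k) i, π m
        = ∑ m ∈ T, ((I.filter (fun i => m ∈ Finset.Ico (i + 1 - k) i)).card : ℝ) * π m := by
      have : ∀ i ∈ I, ∑ m ∈ Finset.Ico (i + 1 - k) i, π m
          = ∑ m ∈ T, if m ∈ Finset.Ico (i + 1 - k) i then π m else 0 := by
        intro i hi
        rw [Finset.sum_ite_mem, Finset.inter_eq_right.mpr (hsub i hi)]
      rw [Finset.sum_congr rfl this, Finset.sum_comm]
      refine Finset.sum_congr rfl fun m _ => ?_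
      rw [Finset.sum_ite, Finset.sum_const_zero, add_zero, Finset.sum_const, nsmul_eq_mul]
    -- step 3: each m is covered at most k times
    have hcard : ∀ m, ((I.filter (fun i => m ∈ Finset.Ico (i + 1 - k) i)).card : ℝ) ≤ (k : ℝ) := by
      intro m
      have : (I.filter (fun i => m ∈ Finset.Ico (i + 1 - k) i)) ⊆ Finset.Ico (m + 1) (m + k) := by
        intro i hi
        simp only [Finset.mem_filter, Finset.mem_Ico] at hi ⊢
        omega
      have hle := Finset.card_le_card this
      have : (Finset.Ico (m + 1) (m + k)).card ≤ k := by
        rw [Nat.card_Ico]; omega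
      exact_mod_cast le_trans hle this
    have h3 : ∑ m ∈ T, ((I.filter (fun i => m ∈ Finset.Ico (i + 1 - k) i)).card : ℝ) * π m
        ≤ ∑ m ∈ T, (k : ℝ) * π m :=
      Finset.sum_le_sum fun m _ => mul_le_mul_of_nonneg_right (hcard m) (hπ m)
    -- step 4: split T
    have hTsplit : ∑ m ∈ T, π m ≤ B + S := by
      have hsubT : T ⊆ Finset.Icc (N + 1 - k) N ∪ I := by
        intro m hm
        simp only [hT, Finset.mem_Ico] at hm
        simp only [Finset.mem_union, Finset.mem_Icc, hI, Finset.mem_Ico]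
        omega
      calc ∑ m ∈ T, π m ≤ ∑ m ∈ Finset.Icc (N + 1 - k) N ∪ I, π m :=
            Finset.sum_le_sum_of_subset_of_nonneg hsubT (fun m _ _ => hπ m)
        _ = B + S := by
            rw [hB, hS]
            exact Finset.sum_union (by
              rw [Finset.disjoint_left]
              intro a ha hb
              simp only [Finset.mem_Icc, hI, Finset.mem_Ico] at ha hb
              omega)
    -- combine
    have hmain : S ≤ τ * k * (B + S) := by
      calc S = τ * ∑ i ∈ I, ∑ m ∈ Finset.Ico (i + 1 - k) i, π m := h1
        _ ≤ τ * ∑ m ∈ T, (k : ℝ) * π m := by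
            rw [h2]
            exact mul_le_mul_of_nonneg_left h3 hτnn
        _ = τ * ((k : ℝ) * ∑ m ∈ T, π m) := by rw [← Finset.mul_sum]
        _ ≤ τ * ((k : ℝ) * (B + S)) := by
            have hknn : (0:ℝ) ≤ k := Nat.cast_nonneg k
            exact mul_le_mul_of_nonneg_left (mul_le_mul_of_nonneg_left hTsplit hknn) hτnn
        _ = τ * k * (B + S) := by ring
    rw [hC, div_mul_eq_mul_div, le_div_iff₀ hτkpos]
    nlinarith [hmain]
  -- conclude
  have hrange : ∀ n : ℕ, (∑ j ∈ Finset.range n, π (N + 1 + j)) ≤ C := by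
    intro n
    have := Finset.sum_Ico_eq_sum_range (f := π) (m := N + 1) (n := N + 1 + n)
    simp only [Nat.add_sub_cancel_left] at this
    calc (∑ j ∈ Finset.range n, π (N + 1 + j))
        = ∑ i ∈ Finset.Ico (N + 1) (N + 1 + n), π i := by
          rw [this]
      _ ≤ C := key n
  have hsummable : Summable (fun j : ℕ => π (N + 1 + j)) :=
    summable_of_sum_range_le (fun j => hπ _) hrange
  exact ⟨hsummable, Summable.tsum_le_of_sum_range_le hsummable hrange⟩
end
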